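/- Let (X,ρ) be a metric space, let P be an abstract porosity on X, and let M be a discrete system of P-porous subsets of X. Then the union ⋃M is P-porous. -/
import Mathlib


open Metric Filter Set

/-- An abstract porosity on a metric space `X`: a relation between points and subsets
of `X` satisfying the axioms (A1), (A2), (A3). -/
structure AbstractPorosity (X : Type*) [MetricSpace X] where
  rel : X → Set X → Prop
  mono : ∀ (x : X) (A B : Set X), A ⊆ B → rel x B → rel x A
  loc : ∀ (x : X) (A : Set X), rel x A ↔ ∃ r > 0, rel x (A ∩ Metric.ball x r)
  clos : ∀ (x : X) (A : Set X), rel x A ↔ rel x (closure A)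

variable {X : Type*} [MetricSpace X]

/-- `A` is `P`-porous if `P(x,A)` holds at each point `x ∈ A`. -/
def AbstractPorosity.Porous (P : AbstractPorosity X) (A : Set X) : Prop :=
  ∀ x ∈ A, P.rel x A

/-- `A` is σ-`P`-porous if it is a countable union of `P`-porous sets. -/
def AbstractPorosity.SigmaPorous (P : AbstractPorosity X) (A : Set X) : Prop :=
  ∃ f : ℕ → Set X, (∀ n, P.Porous (f n)) ∧ A = ⋃ n, f n

/-- `A` is σ-`P`-porous at `x` if some `A ∩ B(x,r)` (r>0) is σ-`P`-porous. -/
def AbstractPorosity.SigmaPorousAt (P : AbstractPorosity X) (A : Set X) (x : X) : Prop :=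
  ∃ r > 0, P.SigmaPorous (A ∩ Metric.ball x r)

/-- The kernel `K_P(A)`: points of `A` at which `A` is not σ-`P`-porous. -/
def AbstractPorosity.kernel (P : AbstractPorosity X) (A : Set X) : Set X :=
  {x ∈ A | ¬ P.SigmaPorousAt A x}

/-- A system of sets is discrete if every point has a ball around it meeting
at most one element of the system. -/
def DiscreteSystem {X : Type*} [MetricSpace X] (M : Set (Set X)) : Prop :=
  ∀ x : X, ∃ r > 0, ∀ A ∈ M, ∀ B ∈ M,
    (Metric.ball x r ∩ A).Nonempty → (Metric.ball x r ∩ B).Nonempty → A = B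

/-- The union of a discrete system of `P`-porous sets is `P`-porous. -/
theorem porous_sUnion_of_discreteSystem {X : Type*} [MetricSpace X] (P : AbstractPorosity X)
    (M : Set (Set X)) (hdisc : DiscreteSystem M) (hpor : ∀ A ∈ M, P.Porous A) :
    P.Porous (⋃₀ M) := by
  intro x hx
  obtain ⟨A, hA, hxA⟩ := hx
  obtain ⟨r, hr, hsep⟩ := hdisc x
  have hsub : ⋃₀ M ∩ Metric.ball x r ⊆ A := by
    rintro y ⟨⟨B, hB, hyB⟩, hyr⟩
    have : A = B := hsep A hA B hB ⟨x, Metric.mem_ball_self hr, hxA⟩ ⟨y, hyr, hyB⟩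
    exact this ▸ hyB
  exact (P.loc x _).mpr ⟨r, hr, P.mono x _ A hsub (hpor A hA x hxA)⟩
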